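/- Let ℤ_{θ_1} denote the ℤG-module whose underlying abelian group is ℤ with G acting through the homomorphism θ_1: G → Aut(ℤ) = {±1} determined by θ_1(a_1) = −1 and θ_1(a_i) = 1 for 2 ≤ i ≤ n. Then H^0(G, ℤ_{θ_1}) = 0, H^1(G, ℤ_{θ_1}) ≅ ℤ^{n−2} ⊕ ℤ/2ℤ, and H^2(G, ℤ_{θ_1}) ≅ ℤ/2ℤ. -/

import Mathlib

open scoped TensorProduct

namespace SurfaceNonOr

/-- The single relator `a₁²a₂²⋯aₙ²` of the nonorientable surface group. -/
def rel (n : ℕ) : FreeGroup (Fin n) :=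
  (List.ofFn fun i : Fin n => (FreeGroup.of i) ^ 2).prod

/-- The nonorientable surface group `⟨a₁,…,aₙ ∣ a₁²a₂²⋯aₙ²⟩`. -/
abbrev SurfaceGroup (n : ℕ) := PresentedGroup ({rel n} : Set (FreeGroup (Fin n)))

noncomputable def a {n : ℕ} (i : Fin n) : SurfaceGroup n := PresentedGroup.of i

/-- `r k = a₁²a₂²⋯a_k²`. -/
noncomputable def r {n : ℕ} (k : ℕ) : SurfaceGroup n :=
  ((List.ofFn fun i : Fin n => (a i) ^ 2).take k).prod

/-- The integral group ring `ℤG`. -/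
abbrev A (n : ℕ) := MonoidAlgebra ℤ (SurfaceGroup n)

/-- Inclusion of the group in its group ring. -/
noncomputable def j {n : ℕ} : SurfaceGroup n →* A n := MonoidAlgebra.of ℤ (SurfaceGroup n)

/-- The Fox derivative `∂p/∂aᵢ = r_{i-1}(1 + aᵢ)`. -/
noncomputable def Fa {n : ℕ} (i : Fin n) : A n := j (r i.val) * (1 + j (a i))

abbrev P0 (n : ℕ) := A n
abbrev P1 (n : ℕ) := Fin n → A n
abbrev P2 (n : ℕ) := A n

/-- `d₁ : P₁ → P₀`, `yᵢ ↦ (aᵢ-1)x`. -/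
noncomputable def d1 {n : ℕ} : P1 n →ₗ[A n] P0 n where
  toFun f := ∑ s, f s * (j (a s) - 1)
  map_add' f g := by simp [add_mul, Finset.sum_add_distrib]
  map_smul' r f := by simp [Finset.mul_sum, mul_assoc, smul_eq_mul, mul_add]

/-- `d₂ : P₂ → P₁`, `w ↦ Σᵢ (∂p/∂aᵢ)yᵢ`. -/
noncomputable def d2 {n : ℕ} : P2 n →ₗ[A n] P1 n where
  toFun c := fun s => c * Fa s
  map_add' c c' := by funext s; simp [add_mul]
  map_smul' c c' := by funext s; simp [mul_assoc, smul_eq_mul]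

/-- The augmentation `ε : ℤG → ℤ`. -/
noncomputable def aug {n : ℕ} : A n →ₐ[ℤ] ℤ := MonoidAlgebra.lift ℤ ℤ (SurfaceGroup n) 1

/-- The values of the action `θ₁` (`θ₁(a₁) = -1`, `θ₁(aᵢ) = 1` for `i ≥ 2`) on the generators. -/
def thetaGen {n : ℕ} : Fin n → ℤˣ := fun i => if (i : ℕ) = 0 then -1 else 1

theorem thetaGen_rel (n : ℕ) :
    ∀ r ∈ ({rel n} : Set (FreeGroup (Fin n))), FreeGroup.lift (thetaGen (n := n)) r = 1 := by
  intro r hr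
  rw [Set.mem_singleton_iff] at hr
  subst hr
  rw [rel, map_list_prod]
  apply List.prod_eq_one
  intro x hx
  rw [List.map_ofFn] at hx
  rw [List.mem_ofFn] at hx
  obtain ⟨i, rfl⟩ := hx
  rw [Function.comp_apply, map_pow]
  exact Int.units_sq _

/-- The action `θ₁` (`θ₁(a₁) = -1`, `θ₁(aᵢ) = 1` for `i ≥ 2`) of `G` on `Aut(ℤ) = {±1}`. -/
noncomputable def theta (n : ℕ) : SurfaceGroup n →* ℤˣ :=
  PresentedGroup.toGroup (thetaGen_rel n)

/-- The `ℤG`-module `ℤ_{θ₁}`: the abelian group `ℤ` with `G` acting through `θ₁` (`θ₁(a₁) = -1`, `θ₁(aᵢ) = 1` for `i ≥ 2`). -/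
noncomputable def Ztheta (n : ℕ) : Rep ℤ (SurfaceGroup n) :=
  Rep.of ((DistribMulAction.toModuleEnd ℤ ℤ).comp (theta n))

/-!
A 2-cocycle `σ` with values in a `G`-module `A` defines an extension `A ×_σ G`, and the cochains
`τ` with `d τ = σ` are exactly the homomorphic sections `g ↦ (τ g, g)`. For the one-relator group
`G`, such a section with prescribed values `cᵢ` on the generators exists iff the lifts `(cᵢ, aᵢ)`
satisfy the relator `a₁²⋯aₙ²`; by Fox calculus this reads `∑ᵢ (∂p/∂aᵢ)·cᵢ = obstruction σ` for
an explicit linear functional `obstruction`.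

For `ℤ_{θ₁}` the Fox sum is `2(c₂ + ⋯ + cₙ)`. Taking `σ = 0`, the 1-cocycles are the tuples with
`c₂ + ⋯ + cₙ = 0`, and the coboundaries are those with `c₂ = ⋯ = cₙ = 0` and `c₁` even; this gives
`ℤ^{n-2} ⊕ ℤ/2`. A 2-cocycle is a coboundary iff `obstruction σ` is even, and the Bockstein of
the homomorphism `G → ℤ/2` detecting `a₂` has odd obstruction, so `H² ≅ ℤ/2`. Finally `a₁` acts
by `-1`, so there are no invariants.
-/

open groupCohomology

noncomputable section

def addEquivOfKerIff {X H V : Type*} [AddCommGroup X] [AddCommGroup H] [AddCommGroup V]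
    (π : X →+ H) (Φ : X →+ V) (hπ : Function.Surjective π) (hΦ : Function.Surjective Φ)
    (hker : ∀ x, π x = 0 ↔ Φ x = 0) : H ≃+ V :=
  (QuotientAddGroup.quotientKerEquivOfSurjective π hπ).symm.trans
    ((QuotientAddGroup.quotientAddEquivOfEq (AddSubgroup.ext hker)).trans
      (QuotientAddGroup.quotientKerEquivOfSurjective Φ hΦ))

section TwistedProduct

universe u

variable {k G : Type u} [CommRing k] [Group G] {A : Rep k G}

/-- The extension of `G` by `A` classified by `σ`. The multiplication
`(x, g) * (y, h) = (x + g • y - σ (g, h), g * h)` uses `-σ` so that `g ↦ (τ g, g)` is a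
homomorphism exactly when `d₁₂ A τ = σ`. -/
@[ext]
structure TwistedProd (σ : cocycles₂ A) where
  fst : A
  snd : G

namespace TwistedProd

variable {σ : cocycles₂ A}

instance : Mul (TwistedProd σ) :=
  ⟨fun x y => ⟨x.fst + A.ρ x.snd y.fst - σ (x.snd, y.snd), x.snd * y.snd⟩⟩

instance : One (TwistedProd σ) := ⟨⟨σ (1, 1), 1⟩⟩

instance : Inv (TwistedProd σ) :=
  ⟨fun x => ⟨σ (1, 1) + σ (x.snd⁻¹, x.snd) - A.ρ x.snd⁻¹ x.fst, x.snd⁻¹⟩⟩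

lemma mk_mul_mk (x y : A) (g h : G) :
    (⟨x, g⟩ * ⟨y, h⟩ : TwistedProd σ) = ⟨x + A.ρ g y - σ (g, h), g * h⟩ := rfl

lemma inv_def (x : A) (g : G) :
    (⟨x, g⟩ : TwistedProd σ)⁻¹ = ⟨σ (1, 1) + σ (g⁻¹, g) - A.ρ g⁻¹ x, g⁻¹⟩ :=
  rfl

lemma one_def : (1 : TwistedProd σ) = ⟨σ (1, 1), 1⟩ := rfl

instance : Group (TwistedProd σ) :=
  Group.ofLeftAxioms
    (fun ⟨x, g⟩ ⟨y, h⟩ ⟨z, j⟩ => by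
      have hσ := (mem_cocycles₂_iff σ.1).1 σ.2 g h j
      simp only [mk_mul_mk, map_add, map_sub, map_mul, Module.End.mul_apply, mul_assoc,
        TwistedProd.mk.injEq, and_true, cocycles₂.val_eq_coe] at hσ ⊢
      linear_combination (norm := module) -hσ)
    (fun ⟨x, g⟩ => by
      simp [one_def, mk_mul_mk, cocycles₂_map_one_fst])
    (fun ⟨x, g⟩ => by
      simp [inv_def, one_def, mk_mul_mk])

def sndHom : TwistedProd σ →* G where
  toFun := snd
  map_one' := rfl
  map_mul' _ _ := rfl

variable (σ) in
def sectionHom (τ : G → A) (hτ : d₁₂ A τ = σ) : G →* TwistedProd σ where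
  toFun g := ⟨τ g, g⟩
  map_one' := by
    have h := congrFun hτ (1, 1)
    simp only [d₁₂_hom_apply, map_one, Module.End.one_apply, mul_one, sub_self, zero_add] at h
    rw [one_def, h]
  map_mul' g h := by
    have h := congrFun hτ (g, h)
    rw [mk_mul_mk, ← h, d₁₂_hom_apply]
    congr 1
    abel

lemma d₁₂_fst_of_section (s : G →* TwistedProd σ) (hs : ∀ g, (s g).snd = g) :
    d₁₂ A (fun g => (s g).fst) = σ := by
  funext ⟨g, h⟩
  have hs' : ∀ g, s g = ⟨(s g).fst, g⟩ := fun g => TwistedProd.ext rfl (hs g)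
  have hmul := congrArg fst (s.map_mul g h)
  rw [hs' g, hs' h, mk_mul_mk] at hmul
  dsimp only at hmul
  rw [d₁₂_hom_apply, hmul]
  abel

lemma mk_sq (x : A) (g : G) :
    (⟨x, g⟩ : TwistedProd σ) ^ 2 = ⟨x + A.ρ g x - σ (g, g), g ^ 2⟩ := by
  rw [pow_two, pow_two, mk_mul_mk]

end TwistedProd

lemma cocycles₁_ext_of_presentedGroup {α : Type u} {rels : Set (FreeGroup α)}
    {A : Rep k (PresentedGroup rels)} {f f' : cocycles₁ A}
    (h : ∀ x, f (PresentedGroup.of x) = f' (PresentedGroup.of x)) : f = f' := by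
  have hs := PresentedGroup.ext (φ := TwistedProd.sectionHom 0 f f.2)
    (ψ := TwistedProd.sectionHom 0 f' f'.2) fun x => TwistedProd.ext (h x) rfl
  exact cocycles₁_ext fun g => congrArg TwistedProd.fst (DFunLike.congr_fun hs g)

end TwistedProduct

section FoxCalculus

variable {n : ℕ} {k : Type} [CommRing k] {A : Rep k (SurfaceGroup n)}

lemma r_succ {j : ℕ} (hj : j < n) : r (j + 1) = r j * a ⟨j, hj⟩ ^ 2 := by
  rw [r, List.prod_take_succ _ _ (by simpa using hj), List.getElem_ofFn]; rfl

lemma mk_rel : PresentedGroup.mk {rel n} (rel n) = 1 :=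
  PresentedGroup.one_of_mem (Set.mem_singleton _)

lemma r_self : r (n := n) n = 1 := by
  have h := mk_rel (n := n)
  change PresentedGroup.mk _ (List.ofFn fun i : Fin n => FreeGroup.of i ^ 2).prod = 1 at h
  rw [map_list_prod, List.map_ofFn] at h
  rw [r, List.take_of_length_le (by simp), ← h]
  rfl

/-- `∑ᵢ (∂p/∂aᵢ) • cᵢ`, with the Fox derivatives `Fa i = r_{i-1} (1 + aᵢ)` of the relator. -/
def foxSum (c : Fin n → A) : A := ∑ i, A.ρ (r i.val) (c i + A.ρ (a i) (c i))

variable (A) in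
/-- `σ (1, 1)` minus the `A`-component of the relator evaluated at the lifts `(0, aᵢ)` in
`TwistedProd σ` (see `liftGen_rel`). -/
def obstruction : (SurfaceGroup n × SurfaceGroup n → A) →ₗ[k] A where
  toFun σ := ∑ i, (A.ρ (r i.val) (σ (a i, a i)) + σ (r i.val, a i ^ 2))
  map_add' σ τ := by
    simp only [Pi.add_apply, map_add, ← Finset.sum_add_distrib]
    exact Finset.sum_congr rfl fun _ _ => by abel
  map_smul' c σ := by simp [Finset.smul_sum]

def liftGen (σ : cocycles₂ A) (c : Fin n → A) : FreeGroup (Fin n) →* TwistedProd σ :=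
  FreeGroup.lift fun i => ⟨c i, a i⟩

lemma prod_take_ofFn_sq (σ : cocycles₂ A) (c : Fin n → A) {j : ℕ} (hj : j ≤ n) :
    ((List.ofFn fun i => (⟨c i, a i⟩ : TwistedProd σ) ^ 2).take j).prod =
      ⟨σ (1, 1) + ∑ i : Fin n with i.val < j,
        (A.ρ (r i.val) (c i + A.ρ (a i) (c i) - σ (a i, a i)) - σ (r i.val, a i ^ 2)),
        r j⟩ := by
  induction j with
  | zero => simp [TwistedProd.one_def, r]
  | succ j ih =>
    have hj' : j < n := hj
    have hfilter : Finset.univ.filter (fun i : Fin n => i.val < j + 1) =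
        insert ⟨j, hj'⟩ (Finset.univ.filter fun i : Fin n => i.val < j) := by
      ext i; simp [Fin.ext_iff]; omega
    rw [List.prod_take_succ _ _ (by simpa using hj'), ih hj'.le, List.getElem_ofFn,
      TwistedProd.mk_sq, TwistedProd.mk_mul_mk, hfilter, Finset.sum_insert (by simp),
      r_succ hj']
    congr 1
    abel

lemma liftGen_rel (σ : cocycles₂ A) (c : Fin n → A) :
    liftGen σ c (rel n) = ⟨σ (1, 1) + foxSum c - obstruction A σ, 1⟩ := by
  have h := prod_take_ofFn_sq σ c le_rfl
  rw [List.take_of_length_le (by simp), r_self] at h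
  change liftGen σ c (List.ofFn fun i : Fin n => FreeGroup.of i ^ 2).prod = _
  rw [map_list_prod, List.map_ofFn]
  have hgen : (liftGen σ c ∘ fun i : Fin n => FreeGroup.of i ^ 2) =
      fun i => (⟨c i, a i⟩ : TwistedProd σ) ^ 2 := by
    funext i
    simp [liftGen]
  rw [hgen, h, Finset.filter_true_of_mem fun (i : Fin n) _ => i.isLt]
  congr 1
  rw [foxSum, obstruction, LinearMap.coe_mk, AddHom.coe_mk, add_sub_assoc,
    ← Finset.sum_sub_distrib]
  congr 1
  refine Finset.sum_congr rfl fun i _ => ?_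
  rw [map_sub]
  abel

theorem exists_d₁₂_eq_iff (σ : cocycles₂ A) (c : Fin n → A) :
    (∃ τ : SurfaceGroup n → A, d₁₂ A τ = σ ∧ ∀ i, τ (a i) = c i) ↔
      foxSum c = obstruction A σ := by
  constructor
  · rintro ⟨τ, hτ, hc⟩
    have h : (TwistedProd.sectionHom σ τ hτ).comp (PresentedGroup.mk _) = liftGen σ c :=
      FreeGroup.ext_hom _ _ fun i => by
        simp [liftGen, TwistedProd.sectionHom, ← hc, a, PresentedGroup.of]
    have h1 := DFunLike.congr_fun h (rel n)
    rw [MonoidHom.comp_apply, mk_rel, map_one, liftGen_rel, TwistedProd.one_def,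
      TwistedProd.mk.injEq, add_sub_assoc, left_eq_add, sub_eq_zero] at h1
    exact h1.1
  · intro h
    have hrel : ∀ w ∈ ({rel n} : Set _),
        FreeGroup.lift (fun i => (⟨c i, a i⟩ : TwistedProd σ)) w = 1 := by
      rintro w rfl
      change liftGen σ c (rel n) = 1
      rw [liftGen_rel, h, add_sub_cancel_right]
      rfl
    set s := PresentedGroup.toGroup hrel
    have hs : TwistedProd.sndHom.comp s = MonoidHom.id _ :=
      PresentedGroup.ext fun i => by simp [s, TwistedProd.sndHom, a]
    exact ⟨fun g => (s g).fst, TwistedProd.d₁₂_fst_of_section s (DFunLike.congr_fun hs),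
      fun i => by simp [s, a]⟩

lemma foxSum_eq_obstruction_d₁₂ (τ : SurfaceGroup n → A) :
    foxSum (fun i => τ (a i)) = obstruction A (d₁₂ A τ) :=
  (exists_d₁₂_eq_iff ⟨d₁₂ A τ, d₁₂_apply_mem_cocycles₂ τ⟩ _).1
    ⟨τ, rfl, fun _ => rfl⟩

lemma foxSum_cocycles₁ (f : cocycles₁ A) : foxSum (fun i => f (a i)) = 0 := by
  rw [foxSum_eq_obstruction_d₁₂, cocycles₁.d₁₂_apply, map_zero]

lemma exists_cocycles₁_of_foxSum_eq_zero (c : Fin n → A) (hc : foxSum c = 0) :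
    ∃ f : cocycles₁ A, ∀ i, f (a i) = c i := by
  obtain ⟨τ, hτ, hτc⟩ := (exists_d₁₂_eq_iff 0 c).2 (by rw [hc]; exact (map_zero _).symm)
  exact ⟨⟨τ, hτ⟩, hτc⟩

lemma mem_coboundaries₂_iff_exists_foxSum (σ : cocycles₂ A) :
    ⇑σ ∈ coboundaries₂ A ↔ ∃ c, foxSum c = obstruction A σ := by
  constructor
  · rintro ⟨τ, hτ⟩
    exact ⟨_, (exists_d₁₂_eq_iff σ _).1 ⟨τ, hτ, fun _ => rfl⟩⟩
  · rintro ⟨c, hc⟩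
    obtain ⟨τ, hτ, -⟩ := (exists_d₁₂_eq_iff σ c).2 hc
    exact ⟨τ, hτ⟩

end FoxCalculus

section Ztheta

lemma Ztheta_ρ_apply {n : ℕ} (g : SurfaceGroup n) (x : Ztheta n) :
    (Ztheta n).ρ g x = ((theta n g : ℤˣ) : ℤ) • x := rfl

lemma theta_a {n : ℕ} (i : Fin n) : theta n (a i) = thetaGen i :=
  PresentedGroup.toGroup.of _

lemma theta_r {n : ℕ} (j : ℕ) : theta n (r j) = 1 := by
  rw [r, map_list_prod]
  refine List.prod_eq_one fun u hu => ?_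
  obtain ⟨x, hx, rfl⟩ := List.mem_map.1 hu
  obtain ⟨i, rfl⟩ := List.mem_ofFn.1 (List.mem_of_mem_take hx)
  rw [map_pow]
  exact Int.units_sq _

lemma two_smul_injective {n : ℕ} :
    Function.Injective ((2 : ℤ) • · : Ztheta n → Ztheta n) :=
  smul_right_injective (R := ℤ) ℤ two_ne_zero

lemma thetaGen_zero {m : ℕ} : thetaGen (0 : Fin (m + 1)) = -1 := rfl

lemma thetaGen_succ {m : ℕ} (j : Fin m) : thetaGen j.succ = 1 := by
  simp [thetaGen]

lemma foxSum_Ztheta {m : ℕ} (c : Fin (m + 2) → Ztheta (m + 2)) :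
    foxSum c = (2 : ℤ) • ∑ j : Fin (m + 1), c j.succ := by
  simp only [foxSum, Ztheta_ρ_apply, theta_r, theta_a, Units.val_one, one_smul]
  rw [Fin.sum_univ_succ, thetaGen_zero, Finset.smul_sum]
  simp [thetaGen_succ, two_smul]

theorem subsingleton_H0_Ztheta (m : ℕ) : Subsingleton (groupCohomology (Ztheta (m + 1)) 0) := by
  have key : ∀ z ∈ (Ztheta (m + 1)).ρ.invariants, z = 0 := fun z hz => by
    have h := hz (a 0)
    rw [Ztheta_ρ_apply, theta_a, thetaGen_zero, Units.val_neg, Units.val_one, neg_one_smul] at h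
    exact (show ∀ z : ℤ, -z = z → z = 0 by omega) z h
  have : Subsingleton (Ztheta (m + 1)).ρ.invariants :=
    ⟨fun x y => Subtype.ext ((key _ x.2).trans (key _ y.2).symm)⟩
  exact ((CategoryTheory.forget (ModuleCat ℤ)).mapIso (H0Iso _)).toEquiv.subsingleton_congr.2 this

/-- The value at the last generator is forced by `foxSum_cocycles₁`, and only the parity of the
value at `a 0` is invariant under adding coboundaries. -/
def H1Coordinates (m : ℕ) : cocycles₁ (Ztheta (m + 2)) →+ (Fin m → ℤ) × ZMod 2 where
  toFun f := (fun j => f (a j.castSucc.succ), Int.cast (f (a 0)))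
  map_zero' := Prod.ext rfl Int.cast_zero
  map_add' f g := Prod.ext rfl (Int.cast_add (f (a 0)) (g (a 0)))

lemma d₀₁_Ztheta_a_zero {m : ℕ} (x : Ztheta (m + 1)) :
    d₀₁ (Ztheta (m + 1)) x (a 0) = (-2 : ℤ) • x := by
  rw [d₀₁_hom_apply, Ztheta_ρ_apply, theta_a, thetaGen_zero, Units.val_neg, Units.val_one,
    neg_one_smul, ← neg_add', ← two_smul ℤ, neg_smul]

lemma d₀₁_Ztheta_a_succ {m : ℕ} (x : Ztheta (m + 1)) (j : Fin m) :
    d₀₁ (Ztheta (m + 1)) x (a j.succ) = 0 := by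
  rw [d₀₁_hom_apply, Ztheta_ρ_apply, theta_a, thetaGen_succ, Units.val_one, one_smul, sub_self]

lemma H1Coordinates_eq_zero_iff {m : ℕ} (f : cocycles₁ (Ztheta (m + 2))) :
    H1Coordinates m f = 0 ↔ ⇑f ∈ coboundaries₁ (Ztheta (m + 2)) := by
  constructor
  · intro hf
    have htail : ∀ j : Fin m, f (a j.castSucc.succ) = 0 := fun j =>
      congrFun (congrArg Prod.fst hf) j
    obtain ⟨t, ht⟩ : (2 : ℤ) ∣ f (a 0) :=
      (ZMod.intCast_zmod_eq_zero_iff_dvd _ 2).1 (congrArg Prod.snd hf)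
    have hlast : f (a (Fin.last m).succ) = 0 := by
      have h := foxSum_cocycles₁ f
      rw [foxSum_Ztheta, Fin.sum_univ_castSucc] at h
      simp only [htail, Finset.sum_const_zero, zero_add] at h
      exact two_smul_injective (h.trans (smul_zero _).symm)
    refine ⟨-t, congrArg Subtype.val (cocycles₁_ext_of_presentedGroup
      (f := ⟨d₀₁ _ (-t), d₀₁_apply_mem_cocycles₁ _⟩) (f' := f) fun i => ?_)⟩
    refine Fin.cases ?_ (fun j => Fin.lastCases ?_ (fun j => ?_) j) i
    · refine (d₀₁_Ztheta_a_zero _).trans (ht ▸ ?_)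
      change -2 * -t = 2 * t
      ring
    · exact (d₀₁_Ztheta_a_succ _ _).trans hlast.symm
    · exact (d₀₁_Ztheta_a_succ _ _).trans (htail j).symm
  · rintro ⟨x, hx⟩
    have hval : ∀ i, f (a i) = d₀₁ _ x (a i) := fun i => (congrFun hx (a i)).symm
    refine Prod.ext (funext fun j => (hval _).trans (d₀₁_Ztheta_a_succ x _)) ?_
    change (Int.cast (f (a 0)) : ZMod 2) = 0
    rw [hval, d₀₁_Ztheta_a_zero]
    have h2 : ∀ y : ℤ, (2 : ℤ) ∣ (-2 : ℤ) • y := fun y => (dvd_neg.2 dvd_rfl).mul_right y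
    exact (ZMod.intCast_zmod_eq_zero_iff_dvd _ 2).2 (h2 x)

lemma H1Coordinates_surjective (m : ℕ) : Function.Surjective (H1Coordinates m) := by
  rintro ⟨v, z⟩
  let c : Fin (m + 2) → ℤ := Fin.cons (z.val : ℤ) (Fin.snoc v (-∑ j, v j))
  obtain ⟨f, hf⟩ := exists_cocycles₁_of_foxSum_eq_zero (A := Ztheta (m + 2)) c <| by
    refine (foxSum_Ztheta c).trans ?_
    change 2 * ∑ j : Fin (m + 1), c j.succ = 0
    simp [c, Fin.sum_univ_castSucc]
  refine ⟨f, Prod.ext (funext fun j => (hf _).trans ?_) ((congrArg Int.cast (hf 0)).trans ?_)⟩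
  · exact (Fin.cons_succ _ _ _).trans (Fin.snoc_castSucc _ _ _)
  · simp [c]

def H2Coordinate (m : ℕ) : cocycles₂ (Ztheta (m + 2)) →+ ZMod 2 :=
  (Int.castAddHom (ZMod 2)).comp
    ((obstruction (Ztheta (m + 2))).toAddMonoidHom.comp (cocycles₂ _).subtype.toAddMonoidHom)

lemma H2Coordinate_eq_zero_iff {m : ℕ} (σ : cocycles₂ (Ztheta (m + 2))) :
    H2Coordinate m σ = 0 ↔ ⇑σ ∈ coboundaries₂ (Ztheta (m + 2)) := by
  rw [mem_coboundaries₂_iff_exists_foxSum]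
  refine (ZMod.intCast_zmod_eq_zero_iff_dvd (obstruction _ σ) 2).trans ⟨?_, ?_⟩
  · rintro ⟨t, ht⟩
    let c : Fin (m + 2) → ℤ := Fin.cons 0 (Pi.single 0 t)
    refine ⟨c, (foxSum_Ztheta c).trans ?_⟩
    change 2 * ∑ j : Fin (m + 1), c j.succ = obstruction _ σ
    simp [c, ht]
  · rintro ⟨c, hc⟩
    exact ⟨∑ j : Fin (m + 1), c j.succ, hc ▸ foxSum_Ztheta c⟩

/-- The homomorphism `G → ℤ/2` sending `a₂` (index `1`) to `1` and the other generators to `0`. -/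
def parity (n : ℕ) : SurfaceGroup n →* Multiplicative (ZMod 2) :=
  PresentedGroup.toGroup (f := fun i => Multiplicative.ofAdd (if i.val = 1 then 1 else 0)) <| by
    rintro _ rfl
    rw [rel, map_list_prod]
    refine List.prod_eq_one fun u hu => ?_
    obtain ⟨x, hx, rfl⟩ := List.mem_map.1 hu
    obtain ⟨i, rfl⟩ := List.mem_ofFn.1 hx
    rw [map_pow]
    exact (by decide : ∀ y : Multiplicative (ZMod 2), y ^ 2 = 1) _

def parityLift (n : ℕ) (g : SurfaceGroup n) : ℤ := (Multiplicative.toAdd (parity n g)).val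

lemma intCast_parityLift {n : ℕ} (g : SurfaceGroup n) :
    (parityLift n g : ZMod 2) = Multiplicative.toAdd (parity n g) := by
  rw [parityLift, Int.cast_natCast, ZMod.natCast_zmod_val]

lemma intCast_units_eq_one (u : ℤˣ) : ((u : ℤ) : ZMod 2) = 1 := by
  rcases Int.units_eq_one_or u with rfl | rfl <;> decide

lemma two_dvd_d₁₂_parityLift {n : ℕ} (p : SurfaceGroup n × SurfaceGroup n) :
    2 ∣ (theta n p.1 : ℤ) * parityLift n p.2 - parityLift n (p.1 * p.2) + parityLift n p.1 := by
  refine (ZMod.intCast_zmod_eq_zero_iff_dvd _ 2).1 ?_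
  push_cast
  rw [intCast_units_eq_one, intCast_parityLift, intCast_parityLift, intCast_parityLift, map_mul,
    toAdd_mul]
  ring

/-- Half the coboundary of an integer lift of `parity`: the Bockstein image of its class. -/
def bockstein (n : ℕ) (p : SurfaceGroup n × SurfaceGroup n) : ℤ :=
  ((theta n p.1 : ℤ) * parityLift n p.2 - parityLift n (p.1 * p.2) + parityLift n p.1) / 2

lemma two_smul_bockstein (n : ℕ) :
    (2 : ℤ) • bockstein n = d₁₂ (Ztheta n) (parityLift n) :=
  funext fun p => Int.mul_ediv_cancel' (two_dvd_d₁₂_parityLift p)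

lemma bockstein_mem_cocycles₂ (n : ℕ) : bockstein n ∈ cocycles₂ (Ztheta n) := by
  refine (mem_cocycles₂_iff _).2 fun g h j => ?_
  have hd :=
    (mem_cocycles₂_iff _).1 (d₁₂_apply_mem_cocycles₂ (A := Ztheta n) (parityLift n)) g h j
  rw [← two_smul_bockstein] at hd
  change 2 * bockstein n (g * h, j) + 2 * bockstein n (g, h) =
    (theta n g : ℤ) * (2 * bockstein n (h, j)) + 2 * bockstein n (g, h * j) at hd
  change bockstein n (g * h, j) + bockstein n (g, h) =
    (theta n g : ℤ) * bockstein n (h, j) + bockstein n (g, h * j)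
  exact mul_left_cancel₀ two_ne_zero (by linear_combination hd)

lemma parity_a {n : ℕ} (i : Fin n) :
    Multiplicative.toAdd (parity n (a i)) = if i.val = 1 then 1 else 0 := by
  rw [parity, a, PresentedGroup.toGroup.of, toAdd_ofAdd]

lemma obstruction_bockstein (m : ℕ) :
    obstruction (Ztheta (m + 2)) (bockstein (m + 2)) =
      ∑ j : Fin (m + 1), parityLift (m + 2) (a j.succ) := by
  have hfox := foxSum_eq_obstruction_d₁₂ (A := Ztheta (m + 2)) (parityLift (m + 2))
  have hsmul := (obstruction (Ztheta (m + 2))).map_smul (2 : ℤ) (bockstein (m + 2))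
  refine (two_smul_injective ?_).symm
  exact (foxSum_Ztheta _).symm.trans
    ((hfox.trans (congrArg _ (two_smul_bockstein _).symm)).trans hsmul)

lemma H2Coordinate_bockstein (m : ℕ) :
    H2Coordinate m ⟨bockstein (m + 2), bockstein_mem_cocycles₂ _⟩ = 1 := by
  change (Int.cast (obstruction (Ztheta (m + 2)) (bockstein (m + 2))) : ZMod 2) = 1
  rw [obstruction_bockstein]
  push_cast
  simp [intCast_parityLift, parity_a]

lemma H2Coordinate_surjective (m : ℕ) : Function.Surjective (H2Coordinate m) := fun z =>
  ⟨(z.val : ℤ) • ⟨bockstein (m + 2), bockstein_mem_cocycles₂ _⟩, by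
    rw [map_zsmul, H2Coordinate_bockstein, zsmul_one, Int.cast_natCast, ZMod.natCast_zmod_val]⟩

def H1Equiv (m : ℕ) : groupCohomology (Ztheta (m + 2)) 1 ≃+ (Fin m → ℤ) × ZMod 2 :=
  addEquivOfKerIff (H1π _).hom.toAddMonoidHom (H1Coordinates m)
    ((ModuleCat.epi_iff_surjective _).1 inferInstance) (H1Coordinates_surjective m)
    fun f => (H1π_eq_zero_iff f).trans (H1Coordinates_eq_zero_iff f).symm

def H2Equiv (m : ℕ) : groupCohomology (Ztheta (m + 2)) 2 ≃+ ZMod 2 :=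
  addEquivOfKerIff (H2π _).hom.toAddMonoidHom (H2Coordinate m)
    ((ModuleCat.epi_iff_surjective _).1 inferInstance) (H2Coordinate_surjective m)
    fun σ => (H2π_eq_zero_iff σ).trans (H2Coordinate_eq_zero_iff σ).symm

end Ztheta

end

/-- `H⁰(G,ℤ_{θ₁}) = 0`, `H¹(G,ℤ_{θ₁}) ≅ ℤ^{n-2} ⊕ ℤ/2` and
`H²(G,ℤ_{θ₁}) ≅ ℤ/2`. -/
theorem statement16 (n : ℕ) (hn : 2 ≤ n) :
    Subsingleton (groupCohomology (Ztheta n) 0) ∧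
    Nonempty (groupCohomology (Ztheta n) 1 ≃+ (Fin (n - 2) → ℤ) × ZMod 2) ∧
    Nonempty (groupCohomology (Ztheta n) 2 ≃+ ZMod 2) := by
  obtain ⟨m, rfl⟩ : ∃ m, n = m + 2 := ⟨n - 2, by omega⟩
  exact ⟨subsingleton_H0_Ztheta (m + 1), ⟨H1Equiv m⟩, ⟨H2Equiv m⟩⟩

end SurfaceNonOr
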